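/- arXiv:2508.01162 — 2 statements merged into one kernel-verified Lean document; each statement's English description precedes it below -/
import Mathlib

section
/- Let φ : [k₀, ∞) → [0, ∞) be nonincreasing and suppose there exist constants C > 0 and ε > 0 such that for all h > k ≥ k₀: φ(h) ≤ C · (h/(h−k)) · (h−k)^{−ε} · φ(k)^{1+ε}. Then there exists d > 0 (depending on C, ε, k₀, φ(k₀)) such that φ(k₀ + d) = 0. -/
/-!
De Giorgi iteration. For `φ(h) ≤ M (h - k)^(-α) φ(k)^β` with `β > 1`, run along the levels
`kⱼ = k₀ + d - d / 2ʲ`, whose gaps are `d / 2ʲ⁺¹`: each step costs a factor `2^α` but raises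
`φ` to the power `β`, so the geometric bound `φ(kⱼ) ≤ φ(k₀) rʲ` with `r = 2^(-α / (β - 1)) < 1`
propagates once `M φ(k₀)^(β-1) 2^(αβ/(β-1)) ≤ d^α`, and `φ(k₀ + d) ≤ φ(kⱼ) → 0`.
For `h ≤ k₀ + d` the hypothesis of the theorem is of this form with `α = β = 1 + ε` and
`M = C (k₀ + d)`; the condition on `d` then holds for large `d`, the left side being linear in `d`.
-/

open Real Filter Set Topology

lemma le_mul_pow_of_succ_le_mul_pow_mul_rpow {Y : ℕ → ℝ} {K b r β : ℝ} (hY : ∀ j, 0 ≤ Y j)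
    (hK : 0 ≤ K) (hb : 0 ≤ b) (hr : 0 ≤ r) (hβ : 0 < β) (hbr : b * r ^ β = r)
    (hstep : ∀ j, Y (j + 1) ≤ K * b ^ j * Y j ^ β) (hY₀ : K * Y 0 ^ (β - 1) ≤ r)
    (j : ℕ) : Y j ≤ Y 0 * r ^ j := by
  induction j with
  | zero => simp
  | succ j ih =>
    have hsplit : Y 0 ^ β = Y 0 ^ (β - 1) * Y 0 := by
      rw [← rpow_add_one' (hY 0) (by linarith), sub_add_cancel]
    calc Y (j + 1) ≤ K * b ^ j * Y j ^ β := hstep j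
      _ ≤ K * b ^ j * (Y 0 * r ^ j) ^ β := by gcongr; exact hY j
      _ = K * Y 0 ^ (β - 1) * Y 0 * (b * r ^ β) ^ j := by
        rw [mul_rpow (hY 0) (by positivity), ← rpow_pow_comm hr, hsplit, mul_pow]; ring
      _ ≤ r * Y 0 * r ^ j := by rw [hbr]; gcongr; exact hY 0
      _ = Y 0 * r ^ (j + 1) := by ring

lemma add_sub_div_two_pow_mem_Icc {k₀ d : ℝ} (hd : 0 ≤ d) (j : ℕ) :
    k₀ + d - d / 2 ^ j ∈ Icc k₀ (k₀ + d) := by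
  have : d / 2 ^ j ≤ d := div_le_self hd (one_le_pow₀ one_le_two)
  constructor <;> linarith [div_nonneg hd (pow_nonneg zero_le_two j)]

lemma deGiorgi_le_geometric {φ : ℝ → ℝ} {k₀ d M α β : ℝ} (hd : 0 < d) (hM : 0 ≤ M)
    (hβ : 1 < β) (hnonneg : ∀ k ∈ Icc k₀ (k₀ + d), 0 ≤ φ k)
    (hiter : ∀ h k, k₀ ≤ k → k < h → h ≤ k₀ + d → φ h ≤ M * (h - k) ^ (-α) * φ k ^ β)
    (hdM : M * φ k₀ ^ (β - 1) * 2 ^ (α * β / (β - 1)) ≤ d ^ α) (j : ℕ) :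
    φ (k₀ + d - d / 2 ^ j) ≤ φ k₀ * (2 ^ (-(α / (β - 1)))) ^ j := by
  set level : ℕ → ℝ := fun j => k₀ + d - d / 2 ^ j
  have hlevel_mem (j : ℕ) : level j ∈ Icc k₀ (k₀ + d) := add_sub_div_two_pow_mem_Icc hd.le j
  have hgap (j : ℕ) : level (j + 1) - level j = d / 2 ^ (j + 1) := by
    simp only [level, pow_succ]; field_simp; ring
  set r : ℝ := 2 ^ (-(α / (β - 1)))
  have hr : 0 < r := by positivity
  have hbr : 2 ^ α * r ^ β = r := by
    rw [← rpow_mul zero_le_two, ← rpow_add two_pos]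
    congr 1; field_simp [(sub_pos.2 hβ).ne']; ring
  have hstep (j : ℕ) :
      φ (level (j + 1)) ≤ M * d ^ (-α) * 2 ^ α * (2 ^ α) ^ j * φ (level j) ^ β := by
    have h := hiter (level (j + 1)) (level j) (hlevel_mem j).1
      (sub_pos.1 (by rw [hgap j]; positivity)) (hlevel_mem (j + 1)).2
    rw [hgap j, div_rpow hd.le (by positivity), ← rpow_pow_comm zero_le_two,
      rpow_neg zero_le_two, inv_pow, div_inv_eq_mul] at h
    exact h.trans_eq (by ring)
  have hsmall : M * d ^ (-α) * 2 ^ α * φ k₀ ^ (β - 1) ≤ r := by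
    have hexp : (2 : ℝ) ^ (α * β / (β - 1)) = 2 ^ α * r⁻¹ := by
      rw [← rpow_neg zero_le_two, neg_neg, ← rpow_add two_pos]
      congr 1; field_simp [(sub_pos.2 hβ).ne']; ring
    rw [hexp] at hdM
    calc M * d ^ (-α) * 2 ^ α * φ k₀ ^ (β - 1)
        = M * φ k₀ ^ (β - 1) * (2 ^ α * r⁻¹) * r / d ^ α := by
          rw [rpow_neg hd.le]; field_simp
      _ ≤ d ^ α * r / d ^ α := by gcongr
      _ = r := by field_simp
  have hlevel_zero : level 0 = k₀ := by simp [level]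
  have hdecay := le_mul_pow_of_succ_le_mul_pow_mul_rpow (fun j => hnonneg _ (hlevel_mem j))
    (by positivity) (by positivity) hr.le (by linarith) hbr hstep (by rwa [hlevel_zero])
  rw [hlevel_zero] at hdecay
  exact hdecay j

lemma deGiorgi_eq_zero {φ : ℝ → ℝ} {k₀ d M α β : ℝ} (hd : 0 < d) (hM : 0 ≤ M) (hα : 0 < α)
    (hβ : 1 < β) (hmono : AntitoneOn φ (Icc k₀ (k₀ + d)))
    (hnonneg : ∀ k ∈ Icc k₀ (k₀ + d), 0 ≤ φ k)
    (hiter : ∀ h k, k₀ ≤ k → k < h → h ≤ k₀ + d → φ h ≤ M * (h - k) ^ (-α) * φ k ^ β)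
    (hdM : M * φ k₀ ^ (β - 1) * 2 ^ (α * β / (β - 1)) ≤ d ^ α) :
    φ (k₀ + d) = 0 := by
  have hr₀ : (0 : ℝ) ≤ 2 ^ (-(α / (β - 1))) := by positivity
  have hr₁ : (2 : ℝ) ^ (-(α / (β - 1))) < 1 :=
    rpow_lt_one_of_one_lt_of_neg one_lt_two (neg_neg_of_pos (div_pos hα (sub_pos.2 hβ)))
  have hlim := (tendsto_pow_atTop_nhds_zero_of_lt_one hr₀ hr₁).const_mul (φ k₀)
  rw [mul_zero] at hlim
  have hend : k₀ + d ∈ Icc k₀ (k₀ + d) := ⟨by linarith, le_rfl⟩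
  refine le_antisymm (ge_of_tendsto' hlim fun j => ?_) (hnonneg _ hend)
  have hlevel := add_sub_div_two_pow_mem_Icc (k₀ := k₀) hd.le j
  exact (hmono hlevel hend hlevel.2).trans
    (deGiorgi_le_geometric hd hM hβ hnonneg hiter hdM j)

lemma exists_pos_mul_add_le_rpow (k₀ : ℝ) {B ε : ℝ} (hB : 0 ≤ B) (hε : 0 < ε) :
    ∃ d, 0 < d ∧ 0 ≤ k₀ + d ∧ B * (k₀ + d) ≤ d ^ (1 + ε) := by
  set d := max (max 1 |k₀|) ((2 * B) ^ ε⁻¹)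
  have hd₁ : 1 ≤ d := (le_max_left _ _).trans' (le_max_left _ _)
  have hk₀ : |k₀| ≤ d := (le_max_left _ _).trans' (le_max_right _ _)
  have hd₀ : 0 < d := one_pos.trans_le hd₁
  have hBd : 2 * B ≤ d ^ ε := by
    calc 2 * B = ((2 * B) ^ ε⁻¹) ^ ε := (rpow_inv_rpow (by positivity) hε.ne').symm
      _ ≤ d ^ ε := by gcongr; exact le_max_right _ _
  refine ⟨d, hd₀, by linarith [neg_abs_le k₀], ?_⟩
  calc B * (k₀ + d) ≤ 2 * B * d := by nlinarith [le_abs_self k₀]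
    _ ≤ d ^ ε * d := by gcongr
    _ = d ^ (1 + ε) := by rw [rpow_one_add' hd₀.le (by linarith)]; ring

theorem stmt_7 (k₀ C ε : ℝ) (hC : 0 < C) (hε : 0 < ε) (φ : ℝ → ℝ)
    (hmono : AntitoneOn φ (Set.Ici k₀))
    (hnonneg : ∀ k, k₀ ≤ k → 0 ≤ φ k)
    (hiter : ∀ h k : ℝ, k₀ ≤ k → k < h →
      φ h ≤ C * (h / (h - k)) * (h - k) ^ (-ε) * φ k ^ (1 + ε)) :
    ∃ d : ℝ, 0 < d ∧ φ (k₀ + d) = 0 := by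
  have hφ₀ := hnonneg k₀ le_rfl
  obtain ⟨d, hd, hk₀d, hB⟩ := exists_pos_mul_add_le_rpow k₀
    (B := C * φ k₀ ^ ε * 2 ^ ((1 + ε) * (1 + ε) / ε)) (by positivity) hε
  refine ⟨d, hd, deGiorgi_eq_zero (M := C * (k₀ + d)) (α := 1 + ε) (β := 1 + ε) hd
    (by positivity) (by linarith) (by linarith) (hmono.mono Icc_subset_Ici_self)
    (fun k hk => hnonneg k hk.1) (fun h k hk hkh hh => ?_) ?_⟩
  · have hpos : 0 < h - k := sub_pos.2 hkh
    have hsplit : (h - k) ^ (-(1 + ε)) = (h - k)⁻¹ * (h - k) ^ (-ε) := by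
      rw [neg_add, rpow_add hpos, rpow_neg_one]
    have hφk := hnonneg k hk
    calc φ h ≤ C * (h / (h - k)) * (h - k) ^ (-ε) * φ k ^ (1 + ε) := hiter h k hk hkh
      _ ≤ C * ((k₀ + d) / (h - k)) * (h - k) ^ (-ε) * φ k ^ (1 + ε) := by gcongr
      _ = C * (k₀ + d) * (h - k) ^ (-(1 + ε)) * φ k ^ (1 + ε) := by
        rw [hsplit, div_eq_mul_inv]; ring
  · calc _ = C * φ k₀ ^ ε * 2 ^ ((1 + ε) * (1 + ε) / ε) * (k₀ + d) := by
          rw [add_sub_cancel_left]; ring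
      _ ≤ _ := hB
end

section
/- Let n ≥ 3, Ω ⊂ ℝⁿ a bounded open set, and a ∈ L^{n/2}(Ω). Then the map G : X^{1,2}(Ω) → ℝ, G(u) = ∫_Ω a(x) u(x)² dx, is sequentially weakly continuous: if u_j ⇀ u weakly in X^{1,2}(Ω), then G(u_j) → G(u). -/
/-!
Weakly convergent sequences are bounded, so by the compact embedding every subsequence of
`(u j)` has a further subsequence converging in `L²(Ω)`. The embedding into `L²(Ω)` is a
bounded operator, hence weakly continuous, so that `L²` limit is `uLim`. Along the
subsequence the squares converge in `L¹` and stay bounded in `L^{n/(n-2)}`, the exponent dual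
to `n/2`; approximating `a` in `L^{n/2}` by simple functions then gives convergence of
`∫ a (u j)²`, and since every subsequence has such a sub-subsequence, the whole sequence
converges.
-/

open MeasureTheory Filter Topology
open scoped ENNReal NNReal InnerProductSpace

theorem tendsto_of_forall_dist_le {ι α : Type*} [PseudoMetricSpace α] {l : Filter ι}
    {c : ι → α} {c₀ : α}
    (h : ∀ ε > 0, ∃ (b : ι → α) (b₀ : α), Tendsto b l (𝓝 b₀) ∧
      (∀ i, dist (c i) (b i) ≤ ε) ∧ dist c₀ b₀ ≤ ε) :
    Tendsto c l (𝓝 c₀) := by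
  refine Metric.tendsto_nhds.2 fun ε hε => ?_
  obtain ⟨b, b₀, hb, hcb, hcb₀⟩ := h (ε / 4) (by positivity)
  filter_upwards [Metric.tendsto_nhds.1 hb (ε / 4) (by positivity)] with i hi
  calc dist (c i) c₀ ≤ dist (c i) (b i) + dist (b i) b₀ + dist b₀ c₀ := dist_triangle4 _ _ _ _
    _ < ε := by rw [dist_comm b₀ c₀]; linarith [hcb i]

section Lebesgue

variable {α : Type*} [MeasurableSpace α] {μ : Measure α}

theorem eLpNorm_sq (f : α → ℝ) (p : ℝ≥0∞) :
    eLpNorm (fun x => f x ^ 2) p μ = eLpNorm f (2 * p) μ ^ 2 := by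
  have h := eLpNorm_norm_rpow f (μ := μ) (p := p) two_pos
  simp only [Real.norm_eq_abs, Real.rpow_two, sq_abs, ENNReal.rpow_two,
    ENNReal.ofReal_ofNat] at h
  rw [h, mul_comm]

theorem MeasureTheory.MemLp.sq {f : α → ℝ} {p : ℝ≥0∞} (hf : MemLp f (2 * p) μ) :
    MemLp (fun x => f x ^ 2) p μ :=
  ⟨hf.1.pow 2, by rw [eLpNorm_sq]; exact ENNReal.pow_lt_top hf.2⟩

theorem enorm_integral_mul_le {p q : ℝ≥0∞} [ENNReal.HolderConjugate p q] {φ h : α → ℝ}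
    (hφ : AEStronglyMeasurable φ μ) (hh : AEStronglyMeasurable h μ) :
    ‖∫ x, φ x * h x ∂μ‖ₑ ≤ eLpNorm φ p μ * eLpNorm h q μ := by
  calc ‖∫ x, φ x * h x ∂μ‖ₑ ≤ eLpNorm (φ • h) 1 μ := by
        rw [eLpNorm_one_eq_lintegral_enorm]; exact enorm_integral_le_lintegral_enorm _
    _ ≤ eLpNorm φ p μ * eLpNorm h q μ := eLpNorm_smul_le_mul_eLpNorm hh hφ

theorem eLpNorm_sq_sub_sq_le {f g : α → ℝ} (hf : AEStronglyMeasurable f μ)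
    (hg : AEStronglyMeasurable g μ) :
    eLpNorm ((fun x => f x ^ 2) - fun x => g x ^ 2) 1 μ ≤
      eLpNorm (f - g) 2 μ * eLpNorm (f + g) 2 μ := by
  have hfactor : ((fun x => f x ^ 2) - fun x => g x ^ 2) = (f - g) • (f + g) := by
    ext x; simp only [Pi.sub_apply, Pi.smul_apply', Pi.add_apply, smul_eq_mul]; ring
  rw [hfactor]
  exact eLpNorm_smul_le_mul_eLpNorm (hf.add hg) (hf.sub hg)

theorem tendsto_eLpNorm_sq_sub_sq {ι : Type*} {l : Filter ι} {f : ι → α → ℝ} {g : α → ℝ}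
    (hf : ∀ i, AEStronglyMeasurable (f i) μ) (hg : MemLp g 2 μ)
    (hlim : Tendsto (fun i => eLpNorm (f i - g) 2 μ) l (𝓝 0)) :
    Tendsto (fun i => eLpNorm ((fun x => f i x ^ 2) - fun x => g x ^ 2) 1 μ) l (𝓝 0) := by
  set c := eLpNorm g 2 μ
  have hbound : ∀ i, eLpNorm ((fun x => f i x ^ 2) - fun x => g x ^ 2) 1 μ ≤
      eLpNorm (f i - g) 2 μ * (eLpNorm (f i - g) 2 μ + (c + c)) := fun i => by
    refine (eLpNorm_sq_sub_sq_le (hf i) hg.1).trans (mul_le_mul_right ?_ _)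
    calc eLpNorm (f i + g) 2 μ = eLpNorm ((f i - g) + (g + g)) 2 μ := by
          congr 1; abel
      _ ≤ eLpNorm (f i - g) 2 μ + eLpNorm (g + g) 2 μ :=
          eLpNorm_add_le ((hf i).sub hg.1) (hg.1.add hg.1) one_le_two
      _ ≤ eLpNorm (f i - g) 2 μ + (c + c) := by
          gcongr; exact eLpNorm_add_le hg.1 hg.1 one_le_two
  have hprod : Tendsto (fun i => eLpNorm (f i - g) 2 μ * (eLpNorm (f i - g) 2 μ + (c + c)))
      l (𝓝 (0 * (0 + (c + c)))) :=
    ENNReal.Tendsto.mul hlim (Or.inr (by finiteness [hg.2])) (hlim.add tendsto_const_nhds)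
      (Or.inr (by simp))
  rw [zero_mul] at hprod
  exact tendsto_of_tendsto_of_tendsto_of_le_of_le tendsto_const_nhds hprod
    (fun _ => zero_le) hbound

theorem tendsto_integral_mul_of_memLp_top {ι : Type*} {l : Filter ι} {s : α → ℝ}
    (hs : MemLp s ∞ μ) {h : ι → α → ℝ} {h₀ : α → ℝ} (hh : ∀ i, Integrable (h i) μ)
    (hh₀ : Integrable h₀ μ) (hlim : Tendsto (fun i => eLpNorm (h i - h₀) 1 μ) l (𝓝 0)) :
    Tendsto (fun i => ∫ x, s x * h i x ∂μ) l (𝓝 (∫ x, s x * h₀ x ∂μ)) := by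
  refine tendsto_integral_of_L1' (fun x => s x * h₀ x) (hs.1.mul hh₀.1)
    (Eventually.of_forall fun i => (hh i).mul_of_top_right hs) ?_
  have hprod := ENNReal.Tendsto.const_mul hlim (Or.inr hs.2.ne)
  rw [mul_zero] at hprod
  refine tendsto_of_tendsto_of_tendsto_of_le_of_le tendsto_const_nhds hprod
    (fun _ => zero_le) fun i => ?_
  have hfactor : ((fun x => s x * h i x) - fun x => s x * h₀ x) = s • (h i - h₀) := by
    ext x; simp only [Pi.sub_apply, Pi.smul_apply', smul_eq_mul]; ring
  rw [hfactor]
  exact eLpNorm_smul_le_eLpNorm_top_mul_eLpNorm 1 ((hh i).1.sub hh₀.1) s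

theorem tendsto_integral_mul_of_tendsto_eLpNorm_one {ι : Type*} {l : Filter ι}
    {p q : ℝ≥0∞} [ENNReal.HolderConjugate p q] (hp : p ≠ ∞) {a : α → ℝ} (ha : MemLp a p μ)
    {h : ι → α → ℝ} {h₀ : α → ℝ} {M : ℝ≥0∞} (hM : M ≠ ∞) (hh : ∀ i, MemLp (h i) q μ)
    (hhM : ∀ i, eLpNorm (h i) q μ ≤ M) (hh₀ : MemLp h₀ q μ) (hh₁ : ∀ i, Integrable (h i) μ)
    (hh₀₁ : Integrable h₀ μ) (hlim : Tendsto (fun i => eLpNorm (h i - h₀) 1 μ) l (𝓝 0)) :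
    Tendsto (fun i => ∫ x, a x * h i x ∂μ) l (𝓝 (∫ x, a x * h₀ x ∂μ)) := by
  set M' := max M (eLpNorm h₀ q μ)
  have hM' : M' ≠ ∞ := max_ne_top hM hh₀.2.ne
  refine tendsto_of_forall_dist_le fun ε hε => ?_
  obtain ⟨δ, hδ, hδM⟩ := ENNReal.exists_nnreal_pos_mul_lt hM' (ENNReal.ofReal_pos.2 hε).ne'
  obtain ⟨s, hs, hsm⟩ := ha.exists_simpleFunc_eLpNorm_sub_lt hp (ENNReal.coe_ne_zero.2 hδ.ne')
  have happrox : ∀ k : α → ℝ, MemLp k q μ → eLpNorm k q μ ≤ M' →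
      dist (∫ x, a x * k x ∂μ) (∫ x, s x * k x ∂μ) ≤ ε := fun k hk hkM => by
    rw [← edist_le_ofReal hε.le]
    calc edist (∫ x, a x * k x ∂μ) (∫ x, s x * k x ∂μ) = ‖∫ x, (a x - s x) * k x ∂μ‖ₑ := by
          rw [edist_eq_enorm_sub, ← integral_sub (f := fun x => a x * k x)
            (g := fun x => s x * k x) (ha.integrable_mul hk) (hsm.integrable_mul hk)]
          simp_rw [sub_mul]
      _ ≤ eLpNorm (a - ⇑s) p μ * eLpNorm k q μ := enorm_integral_mul_le (ha.1.sub hsm.1) hk.1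
      _ ≤ δ * M' := by gcongr
      _ ≤ ENNReal.ofReal ε := hδM.le
  exact ⟨_, _, tendsto_integral_mul_of_memLp_top (s.memLp_top μ) hh₁ hh₀₁ hlim,
    fun i => happrox _ (hh i) ((hhM i).trans (le_max_left _ _)), happrox _ hh₀ (le_max_right _ _)⟩

theorem tendsto_integral_mul_sq [IsFiniteMeasure μ] {ι : Type*} {l : Filter ι}
    {p q : ℝ≥0∞} [ENNReal.HolderConjugate p q] (hp : p ≠ ∞) {a : α → ℝ} (ha : MemLp a p μ)
    {f : ι → α → ℝ} {g : α → ℝ} {M : ℝ≥0∞} (hM : M ≠ ∞) (hf : ∀ i, MemLp (f i) (2 * q) μ)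
    (hfM : ∀ i, eLpNorm (f i) (2 * q) μ ≤ M) (hg : MemLp g (2 * q) μ)
    (hlim : Tendsto (fun i => eLpNorm (f i - g) 2 μ) l (𝓝 0)) :
    Tendsto (fun i => ∫ x, a x * f i x ^ 2 ∂μ) l (𝓝 (∫ x, a x * g x ^ 2 ∂μ)) := by
  have h2q : 2 ≤ 2 * q := by
    simpa using le_mul_of_one_le_right' (a := (2 : ℝ≥0∞)) (ENNReal.HolderTriple.le q p 1)
  exact tendsto_integral_mul_of_tendsto_eLpNorm_one hp ha (M := M ^ 2) (by finiteness)
    (fun i => (hf i).sq) (fun i => by rw [eLpNorm_sq]; gcongr; exact hfM i) hg.sq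
    (fun i => ((hf i).mono_exponent h2q).integrable_sq) (hg.mono_exponent h2q).integrable_sq
    (tendsto_eLpNorm_sq_sub_sq (fun i => (hf i).1) (hg.mono_exponent h2q) hlim)

end Lebesgue

section Hilbert

variable {H K : Type*} [NormedAddCommGroup H] [InnerProductSpace ℝ H]
  [NormedAddCommGroup K] [InnerProductSpace ℝ K]

theorem exists_norm_le_of_tendsto_inner [CompleteSpace H] {u : ℕ → H} {u₀ : H}
    (hweak : ∀ v, Tendsto (fun j => ⟪u j, v⟫_ℝ) atTop (𝓝 ⟪u₀, v⟫_ℝ)) :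
    ∃ C, ∀ j, ‖u j‖ ≤ C := by
  obtain ⟨C, hC⟩ := banach_steinhaus (g := fun j => innerSL ℝ (u j)) fun v => by
    obtain ⟨C, hC⟩ := (hweak v).norm.bddAbove_range
    exact ⟨C, fun j => hC ⟨j, rfl⟩⟩
  exact ⟨C, fun j => (innerSL_apply_norm ℝ (u j)).symm.trans_le (hC j)⟩

theorem tendsto_inner_map_of_tendsto_inner [CompleteSpace H] {ι : Type*} {l : Filter ι}
    (T : H →L[ℝ] K) {u : ι → H} {u₀ : H}
    (hweak : ∀ v, Tendsto (fun i => ⟪u i, v⟫_ℝ) l (𝓝 ⟪u₀, v⟫_ℝ)) (y : K) :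
    Tendsto (fun i => ⟪T (u i), y⟫_ℝ) l (𝓝 ⟪T u₀, y⟫_ℝ) := by
  set z := (InnerProductSpace.toDual ℝ H).symm ((innerSL ℝ y).comp T)
  have hz : ∀ v, ⟪T v, y⟫_ℝ = ⟪v, z⟫_ℝ := fun v => by
    rw [real_inner_comm z v, InnerProductSpace.toDual_symm_apply]
    exact real_inner_comm _ _
  simpa only [hz] using hweak z

theorem eq_of_tendsto_inner_of_tendsto {ι : Type*} {l : Filter ι} [l.NeBot] {x : ι → K}
    {x₀ y₀ : K} (hweak : ∀ y, Tendsto (fun i => ⟪x i, y⟫_ℝ) l (𝓝 ⟪x₀, y⟫_ℝ))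
    (hstrong : Tendsto x l (𝓝 y₀)) : x₀ = y₀ :=
  ext_inner_right ℝ fun y => tendsto_nhds_unique (hweak y) (hstrong.inner tendsto_const_nhds)

end Hilbert

section Realization

variable {α H : Type*} [MeasurableSpace α] {μ : Measure α} [NormedAddCommGroup H]

theorem exists_eLpNorm_le_of_exponent_le [IsFiniteMeasure μ] {p P : ℝ≥0∞} (hp : p ≠ 0)
    (hpP : p ≤ P) {F : H → α → ℝ} (hF : ∀ v, AEStronglyMeasurable (F v) μ) {C : ℝ}
    (hC : 0 ≤ C) (hbound : ∀ v, eLpNorm (F v) P μ ≤ ENNReal.ofReal (C * ‖v‖)) :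
    ∃ C' ≥ 0, ∀ v, eLpNorm (F v) p μ ≤ ENNReal.ofReal (C' * ‖v‖) := by
  set κ := μ Set.univ ^ (1 / p.toReal - 1 / P.toReal)
  have hκ : κ ≠ ∞ := by
    refine ENNReal.rpow_ne_top_of_nonneg ?_ (measure_ne_top μ _)
    rcases eq_or_ne P ∞ with rfl | hP
    · simp
    · have hp' : 0 < p.toReal := ENNReal.toReal_pos hp (ne_top_of_le_ne_top hP hpP)
      exact sub_nonneg.2 (one_div_le_one_div_of_le hp' (ENNReal.toReal_mono hP hpP))
  refine ⟨C * κ.toReal, by positivity, fun v => ?_⟩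
  calc eLpNorm (F v) p μ ≤ eLpNorm (F v) P μ * κ :=
        eLpNorm_le_eLpNorm_mul_rpow_measure_univ hpP (hF v)
    _ ≤ ENNReal.ofReal (C * ‖v‖) * ENNReal.ofReal κ.toReal := by
        rw [ENNReal.ofReal_toReal hκ]; gcongr; exact hbound v
    _ = ENNReal.ofReal (C * κ.toReal * ‖v‖) := by
        rw [← ENNReal.ofReal_mul (by positivity)]; ring_nf

variable [NormedSpace ℝ H] {p : ℝ≥0∞} [Fact (1 ≤ p)]

noncomputable def LinearMap.toLpOfBound (ι : H →ₗ[ℝ] (α → ℝ)) (hι : ∀ v, MemLp (ι v) p μ)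
    {C : ℝ} (hC : 0 ≤ C) (hbound : ∀ v, eLpNorm (ι v) p μ ≤ ENNReal.ofReal (C * ‖v‖)) :
    H →L[ℝ] Lp ℝ p μ :=
  LinearMap.mkContinuous
    { toFun := fun v => (hι v).toLp (ι v)
      map_add' := fun v w => by
        rw [← MemLp.toLp_add]
        exact MemLp.toLp_congr _ _ (by rw [map_add])
      map_smul' := fun c v => by
        rw [RingHom.id_apply, ← MemLp.toLp_const_smul]
        exact MemLp.toLp_congr _ _ (by rw [map_smul]) }
    C fun v => by
      rw [LinearMap.coe_mk, AddHom.coe_mk, Lp.norm_toLp]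
      exact ENNReal.toReal_le_of_le_ofReal (by positivity) (hbound v)

theorem LinearMap.edist_toLpOfBound (ι : H →ₗ[ℝ] (α → ℝ)) (hι : ∀ v, MemLp (ι v) p μ)
    {C : ℝ} (hC : 0 ≤ C) (hbound : ∀ v, eLpNorm (ι v) p μ ≤ ENNReal.ofReal (C * ‖v‖))
    (v w : H) :
    edist (ι.toLpOfBound hι hC hbound v) (ι.toLpOfBound hι hC hbound w) =
      eLpNorm (ι v - ι w) p μ := by
  rw [edist_eq_enorm_sub, ← map_sub]
  change ‖(hι (v - w)).toLp (ι (v - w))‖ₑ = _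
  rw [Lp.enorm_toLp, map_sub]

end Realization

theorem holderConjugate_ofReal_div {r : ℝ} (hr : 2 < r) :
    ENNReal.HolderConjugate (ENNReal.ofReal (r / 2)) (ENNReal.ofReal (r / (r - 2))) := by
  have hr2 : 0 < r - 2 := by linarith
  rw [ENNReal.holderConjugate_iff, ← ENNReal.ofReal_inv_of_pos (by positivity),
    ← ENNReal.ofReal_inv_of_pos (by positivity), ← ENNReal.ofReal_add (by positivity)
    (by positivity), ← ENNReal.ofReal_one]
  congr 1
  field_simp
  ring

/-- `X^{1,2}(Ω)` is modelled as a Hilbert space `H` whose elements are realized as functions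
via `ι`, continuously embedded in `L^{2*}(Ω)` and compactly embedded in `L²(Ω)`. -/
theorem stmt_11_general (n : ℕ) (hn : 3 ≤ n)
    (Ω : Set (EuclideanSpace ℝ (Fin n)))
    (hΩbdd : Bornology.IsBounded Ω)
    (a : EuclideanSpace ℝ (Fin n) → ℝ)
    (ha : MemLp a (ENNReal.ofReal ((n : ℝ) / 2)) (volume.restrict Ω))
    {H : Type*} [NormedAddCommGroup H] [InnerProductSpace ℝ H] [CompleteSpace H]
    (ι : H →ₗ[ℝ] (EuclideanSpace ℝ (Fin n) → ℝ))
    (hmeas : ∀ v : H, Measurable (ι v))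
    -- continuous embedding into L^{2*}(Ω), 2* = 2n/(n-2)
    (hcont : ∃ C : ℝ, 0 < C ∧ ∀ v : H,
      eLpNorm (ι v) (ENNReal.ofReal (2 * n / ((n : ℝ) - 2))) (volume.restrict Ω) ≤
        ENNReal.ofReal (C * ‖v‖))
    -- compact embedding into L²(Ω)
    (hcpt : ∀ v : ℕ → H, (∃ M : ℝ, ∀ j, ‖v j‖ ≤ M) →
      ∃ (σ : ℕ → ℕ) (w : H), StrictMono σ ∧
        Tendsto (fun j => eLpNorm (ι (v (σ j)) - ι w) 2 (volume.restrict Ω)) atTop (nhds 0))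
    (u : ℕ → H) (uLim : H)
    (hweak : ∀ v : H, Tendsto (fun j => (inner ℝ (u j) v : ℝ)) atTop (nhds (inner ℝ uLim v))) :
    Tendsto (fun j => ∫ x in Ω, a x * (ι (u j)) x ^ 2) atTop
      (nhds (∫ x in Ω, a x * (ι uLim) x ^ 2)) := by
  set μ := volume.restrict Ω
  have hμ : IsFiniteMeasure μ := isFiniteMeasure_restrict.2 hΩbdd.measure_lt_top.ne
  have hpq := holderConjugate_ofReal_div (r := n) (by exact_mod_cast hn)
  set p := ENNReal.ofReal ((n : ℝ) / 2)
  set q := ENNReal.ofReal ((n : ℝ) / ((n : ℝ) - 2))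
  obtain ⟨C, hC, hCbound⟩ := hcont
  rw [mul_div_assoc, ENNReal.ofReal_mul zero_le_two, ENNReal.ofReal_ofNat] at hCbound
  have hmem : ∀ v, MemLp (ι v) (2 * q) μ := fun v =>
    ⟨(hmeas v).aestronglyMeasurable, (hCbound v).trans_lt ENNReal.ofReal_lt_top⟩
  have h2q : (2 : ℝ≥0∞) ≤ 2 * q := le_mul_of_one_le_right' (ENNReal.HolderTriple.le q p 1)
  obtain ⟨C₂, hC₂, hC₂bound⟩ :=
    exists_eLpNorm_le_of_exponent_le two_ne_zero h2q (fun v => (hmem v).1) hC.le hCbound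
  have hmem₂ : ∀ v, MemLp (ι v) 2 μ := fun v => (hmem v).mono_exponent h2q
  obtain ⟨T, hT⟩ : ∃ T : H →L[ℝ] Lp ℝ 2 μ, ∀ v w, edist (T v) (T w) = eLpNorm (ι v - ι w) 2 μ :=
    ⟨_, ι.edist_toLpOfBound hmem₂ hC₂ hC₂bound⟩
  obtain ⟨B, hB⟩ := exists_norm_le_of_tendsto_inner hweak
  refine tendsto_of_subseq_tendsto fun ns hns => ?_
  obtain ⟨σ, w, hσ, hconv⟩ := hcpt (u ∘ ns) ⟨B, fun j => hB _⟩
  have hsub : Tendsto (fun j => ns (σ j)) atTop atTop := hns.comp hσ.tendsto_atTop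
  have hTw : T uLim = T w := eq_of_tendsto_inner_of_tendsto
    (tendsto_inner_map_of_tendsto_inner T fun v => (hweak v).comp hsub)
    (tendsto_iff_edist_tendsto_0.2 (by simpa only [hT, Function.comp_apply] using hconv))
  have hL2 : Tendsto (fun j => eLpNorm (ι (u (ns (σ j))) - ι uLim) 2 μ) atTop (𝓝 0) := by
    simpa only [← hT, hTw, Function.comp_apply] using hconv
  exact ⟨σ, tendsto_integral_mul_sq ENNReal.ofReal_ne_top ha ENNReal.ofReal_ne_top
    (fun j => hmem _) (fun j => (hCbound _).trans (ENNReal.ofReal_le_ofReal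
      (mul_le_mul_of_nonneg_left (hB _) hC.le))) (hmem uLim) hL2⟩

/-- Weak sequential continuity of `u ↦ ∫_Ω a u²` on `X^{1,2}(Ω)`, modelled as a Hilbert
space `H` whose elements are realized as functions via `ι`, continuously embedded in
`L^{2*}(Ω)` and compactly embedded in `L²(Ω)`. -/
theorem stmt_11 (n : ℕ) (hn : 3 ≤ n)
    (Ω : Set (EuclideanSpace ℝ (Fin n))) (hΩopen : IsOpen Ω)
    (hΩbdd : Bornology.IsBounded Ω)
    (a : EuclideanSpace ℝ (Fin n) → ℝ)
    (ha : MemLp a (ENNReal.ofReal ((n : ℝ) / 2)) (volume.restrict Ω))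
    {H : Type*} [NormedAddCommGroup H] [InnerProductSpace ℝ H] [CompleteSpace H]
    (ι : H →ₗ[ℝ] (EuclideanSpace ℝ (Fin n) → ℝ))
    (hmeas : ∀ v : H, Measurable (ι v))
    -- continuous embedding into L^{2*}(Ω), 2* = 2n/(n-2)
    (hcont : ∃ C : ℝ, 0 < C ∧ ∀ v : H,
      eLpNorm (ι v) (ENNReal.ofReal (2 * n / ((n : ℝ) - 2))) (volume.restrict Ω) ≤
        ENNReal.ofReal (C * ‖v‖))
    -- compact embedding into L²(Ω)
    (hcpt : ∀ v : ℕ → H, (∃ M : ℝ, ∀ j, ‖v j‖ ≤ M) →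
      ∃ (σ : ℕ → ℕ) (w : H), StrictMono σ ∧
        Tendsto (fun j => eLpNorm (ι (v (σ j)) - ι w) 2 (volume.restrict Ω)) atTop (nhds 0))
    (u : ℕ → H) (uLim : H)
    (hweak : ∀ v : H, Tendsto (fun j => (inner ℝ (u j) v : ℝ)) atTop (nhds (inner ℝ uLim v))) :
    Tendsto (fun j => ∫ x in Ω, a x * (ι (u j)) x ^ 2) atTop
      (nhds (∫ x in Ω, a x * (ι uLim) x ^ 2)) :=
  stmt_11_general n hn Ω hΩbdd a ha ι hmeas hcont hcpt u uLim hweak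
end
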